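/- Let μ be a measure on ℝ² \ {0}, finite on Borel sets bounded away from 0, satisfying μ(tM) = t^{-α} μ(M) for all t > 0 and some α > 0. Let L∨ := ℝ² \ (-∞,0]² (the set of points with at least one strictly positive coordinate). Then for every a = (a₁, a₂) with a₁, a₂ > 0, μ(∂(a + L∨)) = 0, where ∂ denotes topological boundary. -/
import Mathlib


open MeasureTheory Set Pointwise
open scoped ENNReal

lemma key_null (μ : Measure (ℝ × ℝ)) (α : ℝ) (hα : 0 < α)
    (hfin : ∀ M : Set (ℝ × ℝ), MeasurableSet M →
      (∃ ε > 0, ∀ x ∈ M, ε ≤ ‖x‖) → μ M < ⊤)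
    (hhom : ∀ t > 0, ∀ M : Set (ℝ × ℝ), MeasurableSet M →
      (∃ ε > 0, ∀ x ∈ M, ε ≤ ‖x‖) →
      μ (t • M) = ENNReal.ofReal (t ^ (-α)) * μ M)
    (L : Set (ℝ × ℝ)) (hL : MeasurableSet L) (ε : ℝ) (hε : 0 < ε)
    (hb : ∀ x ∈ L, ε ≤ ‖x‖)
    (f : ℝ × ℝ → ℝ) (hf : ∀ (t : ℝ) (x : ℝ × ℝ), f (t • x) = t * f x)
    (c : ℝ) (hc : c ≠ 0) (hfc : ∀ x ∈ L, f x = c) : μ L = 0 := by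
  by_contra h
  set t : ℕ → ℝ := fun n => 1 + 1 / (n + 2) with ht
  have ht1 : ∀ n, (1 : ℝ) < t n := by
    intro n; simp only [ht, lt_add_iff_pos_right]; positivity
  have ht2 : ∀ n, t n ≤ 2 := by
    intro n
    have : (1 : ℝ) / (n + 2) ≤ 1 := by
      rw [div_le_one (by positivity)]; linarith [Nat.cast_nonneg (α := ℝ) n]
    simp only [ht]; linarith
  have ht0 : ∀ n, (0 : ℝ) < t n := fun n => lt_trans one_pos (ht1 n)
  have htinj : Function.Injective t := by
    intro m n hmn
    have : (1 : ℝ) / (m + 2) = 1 / (n + 2) := by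
      simpa [ht] using hmn
    have h2 : ((m:ℝ)+2)⁻¹ = ((n:ℝ)+2)⁻¹ := by simpa [one_div] using this
    have h3 := inv_injective h2
    have : (m : ℝ) = n := by linarith
    exact_mod_cast this
  have hbd : ∀ n, ∀ x ∈ t n • L, ε ≤ ‖x‖ := by
    intro n x hx
    obtain ⟨y, hy, rfl⟩ := hx
    rw [norm_smul]
    calc ε ≤ ‖y‖ := hb y hy
    _ ≤ ‖t n‖ * ‖y‖ := by
        nth_rewrite 1 [← one_mul ‖y‖]
        apply mul_le_mul_of_nonneg_right _ (norm_nonneg _)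
        rw [Real.norm_eq_abs, abs_of_pos (ht0 n)]
        exact le_of_lt (ht1 n)
  have hmeas : ∀ n, MeasurableSet (t n • L) := fun n =>
    hL.const_smul_of_ne_zero (ne_of_gt (ht0 n))
  have hdisj : Pairwise (Function.onFun Disjoint fun n => t n • L) := by
    intro m n hmn
    rw [Function.onFun, Set.disjoint_left]
    rintro z ⟨x, hx, rfl⟩ ⟨y, hy, hzy⟩
    apply hmn
    apply htinj
    have h1 : f (t m • x) = t m * c := by rw [hf]; rw [hfc x hx]
    have h2 : f (t n • y) = t n * c := by rw [hf]; rw [hfc y hy]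
    have h3 : f (t n • y) = f (t m • x) := congrArg f hzy
    have : t m * c = t n * c := by rw [← h1, ← h2, h3]
    exact mul_right_cancel₀ hc this
  have hU : MeasurableSet (⋃ n, t n • L) := MeasurableSet.iUnion hmeas
  have hUfin : μ (⋃ n, t n • L) < ⊤ := by
    apply hfin _ hU ⟨ε, hε, ?_⟩
    intro x hx
    obtain ⟨n, hn⟩ := Set.mem_iUnion.mp hx
    exact hbd n x hn
  have hsum : μ (⋃ n, t n • L) = ∑' n, μ (t n • L) := measure_iUnion hdisj hmeas
  have hterm : ∀ n, μ (t n • L) = ENNReal.ofReal ((t n) ^ (-α)) * μ L := fun n =>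
    hhom (t n) (ht0 n) L hL ⟨ε, hε, hb⟩
  have hLfin : μ L < ⊤ := hfin L hL ⟨ε, hε, hb⟩
  have hlow : ∀ n, ENNReal.ofReal ((2:ℝ) ^ (-α)) * μ L ≤ μ (t n • L) := by
    intro n
    rw [hterm n]
    apply mul_le_mul_left
    apply ENNReal.ofReal_le_ofReal
    exact Real.rpow_le_rpow_of_nonpos (ht0 n) (ht2 n) (by linarith)
  have hc0 : ENNReal.ofReal ((2:ℝ) ^ (-α)) * μ L ≠ 0 := by
    exact mul_ne_zero (ne_of_gt (ENNReal.ofReal_pos.mpr (Real.rpow_pos_of_pos two_pos _))) h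
  have htop : (⊤ : ℝ≥0∞) ≤ μ (⋃ n, t n • L) := by
    rw [hsum]
    calc (⊤ : ℝ≥0∞) = ∑' _ : ℕ, ENNReal.ofReal ((2:ℝ) ^ (-α)) * μ L :=
      (ENNReal.tsum_const_eq_top_of_ne_zero hc0).symm
    _ ≤ ∑' n, μ (t n • L) := ENNReal.tsum_le_tsum hlow
  exact (ne_of_lt hUfin) (top_le_iff.mp htop)

/-- For a homogeneous measure of index `-α` (finite on sets bounded away from the
origin), the boundary of the translated ruin set `a + L∨`, where
`L∨ = ℝ² \ (-∞,0]²` and `a` has strictly positive coordinates, is a null set. -/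
theorem homogeneous_measure_boundary_null (μ : Measure (ℝ × ℝ)) (α : ℝ) (hα : 0 < α)
    (hzero : μ {(0 : ℝ × ℝ)} = 0)
    (hfin : ∀ M : Set (ℝ × ℝ), MeasurableSet M →
      (∃ ε > 0, ∀ x ∈ M, ε ≤ ‖x‖) → μ M < ⊤)
    (hhom : ∀ t > 0, ∀ M : Set (ℝ × ℝ), MeasurableSet M →
      (∃ ε > 0, ∀ x ∈ M, ε ≤ ‖x‖) →
      μ (t • M) = ENNReal.ofReal (t ^ (-α)) * μ M)
    (a₁ a₂ : ℝ) (ha₁ : 0 < a₁) (ha₂ : 0 < a₂) :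
    μ (frontier (((a₁, a₂) : ℝ × ℝ) +ᵥ {x : ℝ × ℝ | 0 < x.1 ∨ 0 < x.2})) = 0 := by
  set A : Set (ℝ × ℝ) := ((a₁, a₂) : ℝ × ℝ) +ᵥ {x : ℝ × ℝ | 0 < x.1 ∨ 0 < x.2} with hA
  have hAeq : A = {x : ℝ × ℝ | a₁ < x.1 ∨ a₂ < x.2} := by
    ext x
    simp only [hA, Set.mem_vadd_set, Set.mem_setOf_eq]
    constructor
    · rintro ⟨y, hy, rfl⟩
      rcases hy with h | h
      · left; simpa using by linarith [h]
      · right; simpa using by linarith [h]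
    · intro hx
      refine ⟨x - (a₁, a₂), ?_, by simp [vadd_eq_add]⟩
      rcases hx with h | h
      · left; simp [Prod.fst_sub]; linarith
      · right; simp [Prod.snd_sub]; linarith
  have hAopen : IsOpen A := by
    rw [hAeq]
    exact (isOpen_lt continuous_const continuous_fst).union
      (isOpen_lt continuous_const continuous_snd)
  set L₁ : Set (ℝ × ℝ) := {x | x.1 = a₁ ∧ x.2 ≤ a₂} with hL₁
  set L₂ : Set (ℝ × ℝ) := {x | x.1 ≤ a₁ ∧ x.2 = a₂} with hL₂
  have hsub : frontier A ⊆ L₁ ∪ L₂ := by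
    have hcl : closure A ⊆ {x : ℝ × ℝ | a₁ ≤ x.1 ∨ a₂ ≤ x.2} := by
      apply closure_minimal
      · rw [hAeq]; rintro x (h | h)
        · exact Or.inl h.le
        · exact Or.inr h.le
      · exact (isClosed_le continuous_const continuous_fst).union
          (isClosed_le continuous_const continuous_snd)
    rw [hAopen.frontier_eq]
    rintro x ⟨hx1, hx2⟩
    rw [hAeq] at hx2
    simp only [Set.mem_setOf_eq, not_or, not_lt] at hx2
    rcases hcl hx1 with h | h
    · exact Or.inl ⟨le_antisymm hx2.1 h, hx2.2⟩
    · exact Or.inr ⟨hx2.1, le_antisymm hx2.2 h⟩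
  have hm1 : MeasurableSet L₁ :=
    ((measurable_fst (measurableSet_singleton a₁))).inter
      (measurable_snd measurableSet_Iic)
  have hm2 : MeasurableSet L₂ :=
    (measurable_fst measurableSet_Iic).inter
      (measurable_snd (measurableSet_singleton a₂))
  have hnull1 : μ L₁ = 0 := by
    apply key_null μ α hα hfin hhom L₁ hm1 a₁ ha₁ ?_ Prod.fst
      (fun t x => rfl) a₁ (ne_of_gt ha₁) (fun x hx => hx.1)
    intro x hx
    calc a₁ = |x.1| := by rw [hx.1, abs_of_pos ha₁]
    _ = ‖x.1‖ := rfl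
    _ ≤ ‖x‖ := norm_fst_le x
  have hnull2 : μ L₂ = 0 := by
    apply key_null μ α hα hfin hhom L₂ hm2 a₂ ha₂ ?_ Prod.snd
      (fun t x => rfl) a₂ (ne_of_gt ha₂) (fun x hx => hx.2)
    intro x hx
    calc a₂ = |x.2| := by rw [hx.2, abs_of_pos ha₂]
    _ = ‖x.2‖ := rfl
    _ ≤ ‖x‖ := norm_snd_le x
  have : μ (L₁ ∪ L₂) = 0 := measure_union_null hnull1 hnull2
  exact measure_mono_null hsub this
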